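/- arXiv:math/0606786 — 2 statements merged into one kernel-verified Lean document; each statement's English description precedes it below -/
import Mathlib

section
/- For the structure constants of the standard SU(3)-structure on ℝ^6, ε_{ijp} ε_{klp} = -κ_{ik}κ_{jl} + κ_{il}κ_{jk} + δ_{ik}δ_{jl} - δ_{jk}δ_{il} holds, and the same expression equals ε̄_{ijp} ε̄_{klp}. -/
noncomputable section

/-- The coefficient array `κ_{ij}` of `κ₀ = e^{12}+e^{34}+e^{56}` (0-based indices). -/
def kap : Fin 6 → Fin 6 → ℝ := fun i j =>
  if (i = 0 ∧ j = 1) ∨ (i = 2 ∧ j = 3) ∨ (i = 4 ∧ j = 5) then 1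
  else if (i = 1 ∧ j = 0) ∨ (i = 3 ∧ j = 2) ∨ (i = 5 ∧ j = 4) then -1 else 0

/-- Values of `ε` on the strictly increasing triples (0-based):
`Ω₀ = e^{135}-e^{146}-e^{245}-e^{236}`. -/
def epsBase : Fin 6 → Fin 6 → Fin 6 → ℝ := fun i j k =>
  if i = 0 ∧ j = 2 ∧ k = 4 then 1
  else if i = 0 ∧ j = 3 ∧ k = 5 then -1
  else if i = 1 ∧ j = 3 ∧ k = 4 then -1
  else if i = 1 ∧ j = 2 ∧ k = 5 then -1 else 0

/-- Values of `ε̄` on the strictly increasing triples (0-based):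
`J₀Ω₀ = -e^{246}+e^{235}+e^{145}+e^{136}`. -/
def epsbarBase : Fin 6 → Fin 6 → Fin 6 → ℝ := fun i j k =>
  if i = 1 ∧ j = 3 ∧ k = 5 then -1
  else if i = 1 ∧ j = 2 ∧ k = 4 then 1
  else if i = 0 ∧ j = 3 ∧ k = 4 then 1
  else if i = 0 ∧ j = 2 ∧ k = 5 then 1 else 0

/-- Totally antisymmetric extension of a coefficient array supported on
strictly increasing triples. -/
def antisym3 (b : Fin 6 → Fin 6 → Fin 6 → ℝ) : Fin 6 → Fin 6 → Fin 6 → ℝ := fun i j k =>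
  ∑ σ : Equiv.Perm (Fin 3),
    ((Equiv.Perm.sign σ : ℤ) : ℝ) * b (![i, j, k] (σ 0)) (![i, j, k] (σ 1)) (![i, j, k] (σ 2))

/-- The totally antisymmetric array `ε_{ijk}` with `Ω₀ = (1/6) ε_{ijk} e^{ijk}`. -/
def eps : Fin 6 → Fin 6 → Fin 6 → ℝ := antisym3 epsBase

/-- The totally antisymmetric array `ε̄_{ijk}` with `J₀Ω₀ = (1/6) ε̄_{ijk} e^{ijk}`. -/
def epsbar : Fin 6 → Fin 6 → Fin 6 → ℝ := antisym3 epsbarBase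

/-- Kronecker delta `δ_{ij}`. -/
def kron (i j : Fin 6) : ℝ := if i = j then 1 else 0

/- ## Auxiliary integer versions -/

def kapZ : Fin 6 → Fin 6 → ℤ := fun i j =>
  if (i = 0 ∧ j = 1) ∨ (i = 2 ∧ j = 3) ∨ (i = 4 ∧ j = 5) then 1
  else if (i = 1 ∧ j = 0) ∨ (i = 3 ∧ j = 2) ∨ (i = 5 ∧ j = 4) then -1 else 0

def kronZ (i j : Fin 6) : ℤ := if i = j then 1 else 0

def epsBZ : Fin 6 → Fin 6 → Fin 6 → ℤ := fun i j k =>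
  if i = 0 ∧ j = 2 ∧ k = 4 then 1
  else if i = 0 ∧ j = 3 ∧ k = 5 then -1
  else if i = 1 ∧ j = 3 ∧ k = 4 then -1
  else if i = 1 ∧ j = 2 ∧ k = 5 then -1 else 0

def epsbarBZ : Fin 6 → Fin 6 → Fin 6 → ℤ := fun i j k =>
  if i = 1 ∧ j = 3 ∧ k = 5 then -1
  else if i = 1 ∧ j = 2 ∧ k = 4 then 1
  else if i = 0 ∧ j = 3 ∧ k = 4 then 1
  else if i = 0 ∧ j = 2 ∧ k = 5 then 1 else 0

def antisym3Z (b : Fin 6 → Fin 6 → Fin 6 → ℤ) : Fin 6 → Fin 6 → Fin 6 → ℤ := fun i j k =>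
  b i j k - b j i k - b k j i - b i k j + b j k i + b k i j

def epsZ := antisym3Z epsBZ
def epsbarZ := antisym3Z epsbarBZ

lemma perm3_univ : (Finset.univ : Finset (Equiv.Perm (Fin 3))) =
    {Equiv.refl _, Equiv.swap 0 1, Equiv.swap 0 2, Equiv.swap 1 2,
     Equiv.swap 0 1 * Equiv.swap 1 2, Equiv.swap 1 2 * Equiv.swap 0 1} := by
  decide

lemma permsum (f : Equiv.Perm (Fin 3) → ℝ) :
    (∑ σ : Equiv.Perm (Fin 3), f σ) =
      f (Equiv.refl _) + f (Equiv.swap 0 1) + f (Equiv.swap 0 2) + f (Equiv.swap 1 2)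
        + f (Equiv.swap 0 1 * Equiv.swap 1 2) + f (Equiv.swap 1 2 * Equiv.swap 0 1) := by
  rw [perm3_univ]
  rw [Finset.sum_insert (by decide), Finset.sum_insert (by decide), Finset.sum_insert (by decide),
    Finset.sum_insert (by decide), Finset.sum_insert (by decide), Finset.sum_singleton]
  ring

lemma antisym3_eq (b : Fin 6 → Fin 6 → Fin 6 → ℝ) (i j k : Fin 6) :
    antisym3 b i j k =
      b i j k - b j i k - b k j i - b i k j + b j k i + b k i j := by
  rw [antisym3, permsum]
  have h1 : (Equiv.swap (0:Fin 3) 1) 0 = 1 := by decide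
  have h2 : (Equiv.swap (0:Fin 3) 1) 1 = 0 := by decide
  have h3 : (Equiv.swap (0:Fin 3) 1) 2 = 2 := by decide
  have h4 : (Equiv.swap (0:Fin 3) 2) 0 = 2 := by decide
  have h5 : (Equiv.swap (0:Fin 3) 2) 1 = 1 := by decide
  have h6 : (Equiv.swap (0:Fin 3) 2) 2 = 0 := by decide
  have h7 : (Equiv.swap (1:Fin 3) 2) 0 = 0 := by decide
  have h8 : (Equiv.swap (1:Fin 3) 2) 1 = 2 := by decide
  have h9 : (Equiv.swap (1:Fin 3) 2) 2 = 1 := by decide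
  have hA : ∀ x : Fin 3, (Equiv.swap (0:Fin 3) 1 * Equiv.swap 1 2 : Equiv.Perm (Fin 3)) x = ![1,2,0] x := by decide
  have hB : ∀ x : Fin 3, (Equiv.swap (1:Fin 3) 2 * Equiv.swap 0 1 : Equiv.Perm (Fin 3)) x = ![2,0,1] x := by decide
  have s1 : (Equiv.Perm.sign (Equiv.swap (0:Fin 3) 1) : ℤ) = -1 :=
    by rw [Equiv.Perm.sign_swap (by decide)]; rfl
  have s2 : (Equiv.Perm.sign (Equiv.swap (0:Fin 3) 2) : ℤ) = -1 :=
    by rw [Equiv.Perm.sign_swap (by decide)]; rfl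
  have s3 : (Equiv.Perm.sign (Equiv.swap (1:Fin 3) 2) : ℤ) = -1 :=
    by rw [Equiv.Perm.sign_swap (by decide)]; rfl
  simp only [h1, h2, h3, h4, h5, h6, h7, h8, h9, hA, hB, s1, s2, s3,
    Equiv.refl_apply, map_mul, Units.val_mul, Int.cast_mul,
    Equiv.Perm.sign_refl, Units.val_one, Int.cast_one, Int.cast_neg,
    Matrix.cons_val_zero, Matrix.cons_val_one, Matrix.head_cons,
    Matrix.cons_val_two, Matrix.tail_cons]
  ring

lemma epsBase_cast (i j k : Fin 6) : epsBase i j k = ((epsBZ i j k : ℤ) : ℝ) := by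
  unfold epsBase epsBZ; split_ifs <;> norm_num

lemma epsbarBase_cast (i j k : Fin 6) : epsbarBase i j k = ((epsbarBZ i j k : ℤ) : ℝ) := by
  unfold epsbarBase epsbarBZ; split_ifs <;> norm_num

lemma eps_cast (i j k : Fin 6) : eps i j k = ((epsZ i j k : ℤ) : ℝ) := by
  rw [eps, antisym3_eq]
  simp only [epsBase_cast]
  rw [epsZ, antisym3Z]
  push_cast
  ring

lemma epsbar_cast (i j k : Fin 6) : epsbar i j k = ((epsbarZ i j k : ℤ) : ℝ) := by
  rw [epsbar, antisym3_eq]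
  simp only [epsbarBase_cast]
  rw [epsbarZ, antisym3Z]
  push_cast
  ring

lemma kap_cast (i j : Fin 6) : kap i j = ((kapZ i j : ℤ) : ℝ) := by
  unfold kap kapZ; split_ifs <;> norm_num

lemma kron_cast (i j : Fin 6) : kron i j = ((kronZ i j : ℤ) : ℝ) := by
  unfold kron kronZ; split_ifs <;> norm_num

lemma main_int : ∀ i j k l : Fin 6,
    ((∑ p, epsZ i j p * epsZ k l p) =
      -(kapZ i k) * kapZ j l + kapZ i l * kapZ j k + kronZ i k * kronZ j l
        - kronZ j k * kronZ i l) ∧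
    ((∑ p, epsbarZ i j p * epsbarZ k l p) =
      -(kapZ i k) * kapZ j l + kapZ i l * kapZ j k + kronZ i k * kronZ j l
        - kronZ j k * kronZ i l) := by decide

/-- `ε_{ijp} ε_{klp} = -κ_{ik}κ_{jl} + κ_{il}κ_{jk} + δ_{ik}δ_{jl} - δ_{jk}δ_{il}`,
and the same expression equals `ε̄_{ijp} ε̄_{klp}`. -/
theorem eps_contract_eps (i j k l : Fin 6) :
    (∑ p, eps i j p * eps k l p) =
      -(kap i k) * kap j l + kap i l * kap j k + kron i k * kron j l
        - kron j k * kron i l ∧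
    (∑ p, epsbar i j p * epsbar k l p) =
      -(kap i k) * kap j l + kap i l * kap j k + kron i k * kron j l
        - kron j k * kron i l := by
  obtain ⟨h1, h2⟩ := main_int i j k l
  constructor
  · simp only [eps_cast, kap_cast, kron_cast, ← Int.cast_mul, ← Int.cast_sum]
    exact_mod_cast h1
  · simp only [epsbar_cast, kap_cast, kron_cast, ← Int.cast_mul, ← Int.cast_sum]
    exact_mod_cast h2

end
end

section
/- A complex 3×3 matrix A = (a_{ij}) lies in su(3) (i.e. is skew-Hermitian with trace zero) if and only if its real 6×6 image ρ(A) = (b_{ij}) under the standard embedding satisfies ρ(A) ∈ so(6), ε_{ijk} b_{jk} = 0 and κ_{jk} b_{jk} = 0, where ε and κ are the structure constants of the standard SU(3)-structure on ℝ^6. -/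
open Matrix

noncomputable section

/-- The standard real representation `ρ : gl(3,ℂ) → gl(6,ℝ)` induced by `J₀`:
`ρ(A)` is the block matrix with 2×2 blocks `[[Re a, Im a], [-Im a, Re a]]`. -/
def rho (A : Matrix (Fin 3) (Fin 3) ℂ) : Matrix (Fin 6) (Fin 6) ℝ := fun i j =>
  let p : Fin 3 := ⟨i.val / 2, by omega⟩
  let q : Fin 3 := ⟨j.val / 2, by omega⟩
  if i.val % 2 = 0 then (if j.val % 2 = 0 then (A p q).re else (A p q).im)
  else (if j.val % 2 = 0 then -(A p q).im else (A p q).re)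

/-!
`ρ(A)` is assembled from the `2 × 2` blocks `[[Re z, Im z], [-Im z, Re z]]` of the entries `z = a_pq`.
The transpose of such a block is the block of `conj z`, so `ρ(A)ᵀ = -ρ(A)` says exactly that `A` is
skew-Hermitian. Every `ρ(A)` commutes with `J₀`, while `Ω₀` has type `(3,0) + (0,3)`, so the
contraction `ε_{ijk} b_{jk}` vanishes for every `A`. Finally `κ_{jk} b_{jk} = 2 Im tr A`, and the real
part of the trace of a skew-Hermitian matrix is zero.
-/

open ComplexConjugate Equiv

/-- Row `2p + r` of `ρ(A)` is row `r` of the `p`-th block row. -/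
abbrev blockIndex : Fin 3 × Fin 2 ≃ Fin 6 := finProdFinEquiv

def realBlock (z : ℂ) : Matrix (Fin 2) (Fin 2) ℝ := !![z.re, z.im; -z.im, z.re]

lemma realBlock_transpose (z : ℂ) : (realBlock z)ᵀ = realBlock (conj z) := by
  ext i j; fin_cases i <;> fin_cases j <;> simp [realBlock]

lemma realBlock_neg (z : ℂ) : realBlock (-z) = -realBlock z := by
  ext i j; fin_cases i <;> fin_cases j <;> simp [realBlock]

lemma realBlock_injective : Function.Injective realBlock := by
  intro z w h
  apply Complex.ext
  · simpa [realBlock] using congrFun (congrFun h 0) 0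
  · simpa [realBlock] using congrFun (congrFun h 0) 1

lemma rho_apply_blockIndex (A : Matrix (Fin 3) (Fin 3) ℂ) (p q : Fin 3) (r s : Fin 2) :
    rho A (blockIndex (p, r)) (blockIndex (q, s)) = realBlock (A p q) r s := by
  have hval (p : Fin 3) (r : Fin 2) : (blockIndex (p, r) : ℕ) = r + 2 * p := rfl
  have hdiv (p : Fin 3) (r : Fin 2) : ((r : ℕ) + 2 * p) / 2 = p := by omega
  have hmod (p : Fin 3) (r : Fin 2) : ((r : ℕ) + 2 * p) % 2 = r := by omega
  simp only [rho, hval, hdiv, hmod, Fin.eta]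
  fin_cases r <;> fin_cases s <;> simp [realBlock]

lemma rho_transpose_eq_neg_iff (A : Matrix (Fin 3) (Fin 3) ℂ) :
    (rho A)ᵀ = -rho A ↔ Aᴴ = -A := by
  calc (rho A)ᵀ = -rho A ↔ ∀ p q, (realBlock (A q p))ᵀ = -realBlock (A p q) := by
        rw [← Matrix.ext_iff]
        constructor
        · intro h p q
          ext r s
          simpa [rho_apply_blockIndex] using h (blockIndex (p, r)) (blockIndex (q, s))
        · intro h i j
          obtain ⟨⟨p, r⟩, rfl⟩ := blockIndex.surjective i
          obtain ⟨⟨q, s⟩, rfl⟩ := blockIndex.surjective j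
          simpa [rho_apply_blockIndex] using congrFun (congrFun (h p q) r) s
    _ ↔ ∀ p q, conj (A q p) = -A p q := by
        simp only [realBlock_transpose, ← realBlock_neg, realBlock_injective.eq_iff]
    _ ↔ Aᴴ = -A := by
        simp only [← Matrix.ext_iff, conjTranspose_apply, RCLike.star_def, Matrix.neg_apply]

lemma antisym3_apply (b : Fin 6 → Fin 6 → Fin 6 → ℝ) (i j k : Fin 6) :
    antisym3 b i j k = b i j k - b i k j - b j i k + b j k i + b k i j - b k j i := by
  have hsucc (e : Perm (Fin 2)) (p : Fin 3) :
      Perm.decomposeFin.symm (p, e) 2 = swap 0 p (e 1).succ :=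
    Perm.decomposeFin_symm_apply_succ e p 1
  simp only [antisym3, Finset.univ_perm_fin_succ, Finset.sum_map, Fintype.sum_prod_type,
    Fin.sum_univ_succ, Finset.univ_unique, Finset.sum_singleton, Equiv.coe_toEmbedding,
    Perm.decomposeFin.symm_sign, Perm.decomposeFin_symm_apply_zero,
    Perm.decomposeFin_symm_apply_one, hsucc]
  norm_num [swap_apply_def, Fin.ext_iff, cons_val_two]
  ring

lemma eps_contraction_rho (A : Matrix (Fin 3) (Fin 3) ℂ) (i : Fin 6) :
    ∑ j, ∑ k, eps i j k * rho A j k = 0 := by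
  fin_cases i <;> simp [Fin.sum_univ_six, eps, antisym3_apply, epsBase, rho]

lemma kap_contraction_rho (A : Matrix (Fin 3) (Fin 3) ℂ) :
    ∑ j, ∑ k, kap j k * rho A j k = 2 * A.trace.im := by
  simp [Fin.sum_univ_six, kap, rho, trace, Fin.sum_univ_three]
  ring

lemma Matrix.re_trace_eq_zero_of_conjTranspose_eq_neg {n : Type*} [Fintype n]
    {A : Matrix n n ℂ} (hA : Aᴴ = -A) : A.trace.re = 0 := by
  have h := congrArg (fun M => (trace M).re) hA
  simp only [trace_conjTranspose, trace_neg, RCLike.star_def, Complex.conj_re, Complex.neg_re] at h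
  linarith

/-- A complex 3×3 matrix `A` lies in `su(3)` (skew-Hermitian and traceless) iff
its image `ρ(A) = (b_{ij})` lies in `so(6)` and satisfies `ε_{ijk} b_{jk} = 0`
(for all `i`) and `κ_{jk} b_{jk} = 0`. -/
theorem mem_su3_iff_rho (A : Matrix (Fin 3) (Fin 3) ℂ) :
    (Aᴴ = -A ∧ A.trace = 0) ↔
      ((rho A)ᵀ = -(rho A) ∧
        (∀ i, ∑ j, ∑ k, eps i j k * rho A j k = 0) ∧
        (∑ j, ∑ k, kap j k * rho A j k = 0)) := by
  simp only [rho_transpose_eq_neg_iff, eps_contraction_rho, kap_contraction_rho,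
    implies_true, true_and, mul_eq_zero, two_ne_zero, false_or]
  refine and_congr_right fun hA => ⟨fun h => by simp [h], fun h => ?_⟩
  exact Complex.ext (re_trace_eq_zero_of_conjTranspose_eq_neg hA) h

end
end
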